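/- Let n ≥ 2. Then s(1 + 𝐢) ≠ 0; that is, the (2n−2)-nd derivative at x = 1 of the function ℝ → ℍ, x ↦ conj(x + 𝐢)·(x² + 1)^{−2}, is a nonzero quaternion. More precisely, up to a nonzero multiplicative constant it equals −((2n−2)!/(16𝐢))·(4/(2i)^{n})·(4n−1−i+(−1)^{n}(i+1)), and the complex number 4n−1−i+(−1)^{n}(i+1) is nonzero. -/

import Mathlib

open Quaternion
noncomputable section

/-- The quaternion imaginary unit `𝐢`. -/
def qi : ℍ[ℝ] := ⟨0, 1, 0, 0⟩

/-- The normalized Cauchy–Szegő kernel density: `s(σ)` is the `(2n−2)`-nd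
derivative at `x = Re σ` of `x ↦ conj(x + Im σ)·(x² + |Im σ|²)^{−2}`. -/
def sker (n : ℕ) (σ : ℍ[ℝ]) : ℍ[ℝ] :=
  iteratedDeriv (2 * n - 2)
    (fun x : ℝ => ((x ^ 2 + ‖σ.im‖ ^ 2) ^ 2)⁻¹ • star ((x : ℍ[ℝ]) + σ.im)) σ.re

/-!
Over `ℂ` the kernel is `(x - i)/(x² + 1)² = 1/((x - i)(x + i)²)`, whose partial fractions
`-¼ (x - i)⁻¹ + ¼ (x + i)⁻¹ + (i/2) (x + i)⁻²` can be differentiated termwise. At `x = 1` and even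
order `2n - 2` the powers of `1 ± i` collapse through `(1 ± i)² = ±2i` to the closed form.
The quaternionic kernel is the image of the complex one under the injective real-algebra embedding
`ℂ → ℍ`, `i ↦ 𝐢`, which commutes with differentiation. The closed form is nonzero because its last
factor has real part `4n - 1 + (-1)ⁿ > 0`.
-/

open Complex Finset
open scoped Nat

theorem iteratedDeriv_eq_of_hasDerivAt_succ {𝕜 F : Type*} [NontriviallyNormedField 𝕜]
    [NormedAddCommGroup F] [NormedSpace 𝕜 F] {E : ℕ → 𝕜 → F}
    (h : ∀ m x, HasDerivAt (E m) (E (m + 1) x) x) (m : ℕ) :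
    iteratedDeriv m (E 0) = E m := by
  induction m with
  | zero => exact iteratedDeriv_zero
  | succ m ih => exact iteratedDeriv_succ.trans (ih ▸ funext fun x => (h m x).deriv)

theorem ofReal_add_ne_zero {a : ℂ} (ha : a.im ≠ 0) (x : ℝ) : (x : ℂ) + a ≠ 0 := by
  intro h
  exact ha (by simpa using congrArg Complex.im h)

def shiftedZPowDeriv (a : ℂ) (k : ℤ) (m : ℕ) (x : ℝ) : ℂ :=
  (∏ j ∈ range m, ((k : ℂ) - j)) * ((x : ℂ) + a) ^ (k - m)

theorem hasDerivAt_shiftedZPowDeriv {a : ℂ} (ha : a.im ≠ 0) (k : ℤ) (m : ℕ) (x : ℝ) :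
    HasDerivAt (shiftedZPowDeriv a k m) (shiftedZPowDeriv a k (m + 1) x) x := by
  have hz : HasDerivAt (fun z : ℂ => (z + a) ^ (k - m))
      (((k - m : ℤ) : ℂ) * ((x : ℂ) + a) ^ (k - m - 1)) x := by
    have := (hasDerivAt_zpow (k - m) _ (Or.inl (ofReal_add_ne_zero ha x))).comp (x : ℂ)
      ((hasDerivAt_id (x : ℂ)).add_const a)
    rwa [mul_one] at this
  refine ((hz.comp_ofReal).const_mul (∏ j ∈ range m, ((k : ℂ) - j))).congr_deriv ?_
  rw [shiftedZPowDeriv, prod_range_succ]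
  push_cast
  ring_nf

theorem factorial_mul_prod_range_neg_sub {R : Type*} [CommRing R] (k m : ℕ) :
    (k ! : R) * ∏ j ∈ range m, (-(k : R) - 1 - j) = (-1) ^ m * (k + m)! := by
  induction m with
  | zero => simp
  | succ m ih =>
    rw [prod_range_succ, ← mul_assoc, ih, ← add_assoc, Nat.factorial_succ]
    push_cast
    ring

theorem zpow_neg_two_sub_two_mul {K : Type*} [DivisionRing K] (w : K) (j : ℕ) :
    w ^ (-2 - 2 * j : ℤ) = ((w ^ 2) ^ (j + 1))⁻¹ := by
  rw [show (-2 - 2 * j : ℤ) = -((2 * (j + 1) : ℕ) : ℤ) by push_cast; ring, zpow_neg, zpow_natCast,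
    pow_mul]

theorem zpow_neg_one_sub_two_mul {K : Type*} [DivisionRing K] {w : K} (hw : w ≠ 0) (j : ℕ) :
    w ^ (-1 - 2 * j : ℤ) = w * ((w ^ 2) ^ (j + 1))⁻¹ := by
  rw [show (-1 - 2 * j : ℤ) = 1 + (-2 - 2 * j) by ring, zpow_add₀ hw, zpow_one,
    zpow_neg_two_sub_two_mul]

/-- The `m`-th derivative of `x ↦ (x - i) / (x² + 1)² = 1 / ((x - i)(x + i)²)`, from its partial
fraction decomposition `-¼ (x - i)⁻¹ + ¼ (x + i)⁻¹ + (i/2) (x + i)⁻²`. -/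
def szegoKernelDeriv (m : ℕ) (x : ℝ) : ℂ :=
  -(4⁻¹ * shiftedZPowDeriv (-I) (-1) m x) + 4⁻¹ * shiftedZPowDeriv I (-1) m x
    + I / 2 * shiftedZPowDeriv I (-2) m x

theorem hasDerivAt_szegoKernelDeriv (m : ℕ) (x : ℝ) :
    HasDerivAt (szegoKernelDeriv m) (szegoKernelDeriv (m + 1) x) x := by
  have hI : I.im ≠ 0 := by simp
  have hnegI : (-I).im ≠ 0 := by simp
  exact (((hasDerivAt_shiftedZPowDeriv hnegI _ m x).const_mul _).neg.add
    ((hasDerivAt_shiftedZPowDeriv hI _ m x).const_mul _)).add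
    ((hasDerivAt_shiftedZPowDeriv hI _ m x).const_mul _)

theorem szegoKernelDeriv_zero (x : ℝ) :
    szegoKernelDeriv 0 x = ((x ^ 2 + 1) ^ 2 : ℝ)⁻¹ • ((x : ℂ) - I) := by
  have hsub : (x : ℂ) + -I ≠ 0 := ofReal_add_ne_zero (by simp) x
  have hadd : (x : ℂ) + I ≠ 0 := ofReal_add_ne_zero (by simp) x
  have hsq : (x : ℂ) ^ 2 + 1 = ((x : ℂ) + -I) * ((x : ℂ) + I) := by linear_combination I_sq
  simp only [szegoKernelDeriv, shiftedZPowDeriv, prod_range_zero, Nat.cast_zero, sub_zero,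
    one_mul, Complex.real_smul]
  push_cast
  rw [hsq]
  field_simp
  linear_combination (8 * I - 8 * (x : ℂ)) * I_sq

theorem szegoKernelDeriv_two_mul_sub_two_one {n : ℕ} (hn : 1 ≤ n) :
    szegoKernelDeriv (2 * n - 2) 1 = -(((2 * n - 2)! : ℂ) / (16 * I)) * (4 / (2 * I) ^ n)
      * (4 * (n : ℂ) - 1 - I + (-1) ^ n * (I + 1)) := by
  obtain ⟨k, rfl⟩ : ∃ k, n = k + 1 := ⟨n - 1, by omega⟩
  have hprod₁ : ∏ j ∈ range (2 * k), (-1 - (j : ℂ)) = (2 * k)! := by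
    simpa [pow_mul] using factorial_mul_prod_range_neg_sub (R := ℂ) 0 (2 * k)
  have hprod₂ : ∏ j ∈ range (2 * k), (-2 - (j : ℂ)) = (2 * k + 1) * (2 * k)! := by
    have := factorial_mul_prod_range_neg_sub (R := ℂ) 1 (2 * k)
    rw [add_comm 1, Nat.factorial_succ (2 * k)] at this
    norm_num [pow_mul] at this
    linear_combination this
  have hsq_add : (1 + I) ^ 2 = 2 * I := by linear_combination I_sq
  have hsq_sub : (1 + -I) ^ 2 = -(2 * I) := by linear_combination I_sq
  simp only [szegoKernelDeriv, shiftedZPowDeriv, show 2 * (k + 1) - 2 = 2 * k by omega, ofReal_one]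
  push_cast
  rw [hprod₁, hprod₂, zpow_neg_one_sub_two_mul (by simp [Complex.ext_iff]),
    zpow_neg_one_sub_two_mul (by simp [Complex.ext_iff]), zpow_neg_two_sub_two_mul, hsq_add,
    hsq_sub, neg_pow, mul_inv, ← inv_pow, inv_neg_one, div_eq_mul_inv _ (16 * I), mul_inv, inv_I,
    div_eq_mul_inv 4]
  generalize ((2 * I) ^ (k + 1))⁻¹ = P
  generalize (-1 : ℂ) ^ (k + 1) = t
  linear_combination ((2 * k)! : ℂ) * P * (1 - t) / 4 * I_sq

theorem re_four_mul_sub_one_sub_I_add_neg_one_pow_pos {n : ℕ} (hn : 1 ≤ n) :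
    0 < (4 * (n : ℂ) - 1 - I + (-1) ^ n * (I + 1)).re := by
  have hn' : (1 : ℝ) ≤ n := by exact_mod_cast hn
  rcases n.even_or_odd with h | h <;> simp [h.neg_one_pow] <;> linarith

@[simp] theorem qi_re : qi.re = 0 := rfl

@[simp] theorem qi_imI : qi.imI = 1 := rfl

@[simp] theorem qi_imJ : qi.imJ = 0 := rfl

@[simp] theorem qi_imK : qi.imK = 0 := rfl

@[simp] theorem qi_im : qi.im = qi := by ext <;> simp

theorem star_qi : star qi = -qi := by ext <;> simp

theorem norm_qi : ‖qi‖ = 1 := by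
  rw [norm_eq_sqrt_real_inner, inner_self, normSq_def']
  simp

theorem ofComplex_I : ofComplex I = qi := by ext <;> simp

theorem sker_one_add_qi (n : ℕ) :
    sker n (1 + qi) = ofComplex (szegoKernelDeriv (2 * n - 2) 1) := by
  have hchain (m : ℕ) (x : ℝ) : HasDerivAt (fun y => ofComplex (szegoKernelDeriv m y))
      (ofComplex (szegoKernelDeriv (m + 1) x)) x :=
    ofComplex.toLinearMap.toContinuousLinearMap.hasFDerivAt.comp_hasDerivAt x
      (hasDerivAt_szegoKernelDeriv m x)
  have hkernel :
      (fun x : ℝ => ((x ^ 2 + ‖(1 + qi).im‖ ^ 2) ^ 2)⁻¹ • star ((x : ℍ[ℝ]) + (1 + qi).im))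
        = fun x => ofComplex (szegoKernelDeriv 0 x) := by
    funext x
    rw [szegoKernelDeriv_zero, map_smul, map_sub, ofComplex_I]
    simp [norm_qi, star_qi, sub_eq_add_neg]
  rw [sker, hkernel, iteratedDeriv_eq_of_hasDerivAt_succ hchain]
  simp

theorem sker_one_add_i_ne_zero (n : ℕ) (hn : 2 ≤ n) :
    sker n (1 + qi) ≠ 0
    ∧ (∃ c : ℝ, c ≠ 0 ∧
        sker n (1 + qi) =
          c • (-((((2 * n - 2).factorial : ℝ) : ℍ[ℝ]) / (16 * qi))
            * (4 / (2 * qi) ^ n)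
            * (((4 * (n : ℝ) - 1 : ℝ) : ℍ[ℝ]) - qi + (-1 : ℍ[ℝ]) ^ n * (qi + 1))))
    ∧ (4 * (n : ℂ) - 1 - Complex.I + (-1 : ℂ) ^ n * (Complex.I + 1)) ≠ 0 := by
  have hn₁ : 1 ≤ n := by omega
  have hfactor : 4 * (n : ℂ) - 1 - I + (-1) ^ n * (I + 1) ≠ 0 := fun h =>
    (re_four_mul_sub_one_sub_I_add_neg_one_pow_pos hn₁).ne' (by rw [h, zero_re])
  have hvalue : szegoKernelDeriv (2 * n - 2) 1 ≠ 0 := by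
    rw [szegoKernelDeriv_two_mul_sub_two_one hn₁]
    refine mul_ne_zero (mul_ne_zero ?_ ?_) hfactor <;> simp [Nat.factorial_ne_zero]
  refine ⟨?_, ⟨1, one_ne_zero, ?_⟩, hfactor⟩
  · rw [sker_one_add_qi]
    exact (map_ne_zero_iff _ ofComplex.injective).mpr hvalue
  · rw [one_smul, sker_one_add_qi, szegoKernelDeriv_two_mul_sub_two_one hn₁]
    simp only [map_neg, map_mul, map_div₀, map_sub, map_add, map_pow, map_natCast, map_ofNat,
      map_one, ofComplex_I]
    push_cast
    norm_cast
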